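/- Let G be a connected graph on n ≥ 2 vertices with maximum degree Δ and second maximum degree Δ′. Then μ_α(G) ≥ (1/2)(α(4n−4−Δ−Δ′) + sqrt(α²(4n−4−Δ−Δ′)² − 4(2α−1)(2n−2−Δ)(2n−2−Δ′))), with equality if and only if G is regular with diameter at most 2. -/

import Mathlib

open Finset Matrix

namespace DistAlpha

variable {V : Type*} [Fintype V] [DecidableEq V]

/-- The distance matrix of a graph, with real entries. -/
noncomputable def distMatrix (G : SimpleGraph V) : Matrix V V ℝ :=
  fun u v => (G.dist u v : ℝ)

/-- The transmission of a vertex: the sum of distances to all vertices. -/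
noncomputable def transmission (G : SimpleGraph V) (u : V) : ℝ :=
  ∑ v, (G.dist u v : ℝ)

/-- The matrix `D_α = α T + (1-α) D`. -/
noncomputable def Dalpha (G : SimpleGraph V) (α : ℝ) : Matrix V V ℝ :=
  α • Matrix.diagonal (transmission G) + (1 - α) • distMatrix G

/-- The distance α-spectral radius: the largest (real) eigenvalue of `D_α`. -/
noncomputable def muAlpha (G : SimpleGraph V) (α : ℝ) : ℝ :=
  sSup (spectrum ℝ (Dalpha G α))

/-- The transmission of a graph: sum of distances over unordered pairs. -/
noncomputable def sigma (G : SimpleGraph V) : ℝ :=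
  (∑ u, ∑ v, (G.dist u v : ℝ)) / 2

/-- A graph is transmission regular if all vertex transmissions are equal. -/
def TransmissionRegular (G : SimpleGraph V) : Prop :=
  ∀ u v : V, transmission G u = transmission G v

/-! ### Auxiliary real-quadratic lemmas -/

/-- The quadratic-root expression appearing in the bound. -/
noncomputable def rQ (α s t : ℝ) : ℝ :=
  (α * (s + t) + Real.sqrt (α ^ 2 * (s + t) ^ 2 - 4 * (2 * α - 1) * s * t)) / 2

lemma discr_nonneg {α s t : ℝ} (hs : 0 ≤ s) (ht : 0 ≤ t) :
    0 ≤ α ^ 2 * (s + t) ^ 2 - 4 * (2 * α - 1) * s * t := by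
  nlinarith [sq_nonneg (α * (s - t)), sq_nonneg (1 - α), mul_nonneg hs ht, sq_nonneg (s - t)]

lemma sqrt_discr_sq {α s t : ℝ} (hs : 0 ≤ s) (ht : 0 ≤ t) :
    (Real.sqrt (α ^ 2 * (s + t) ^ 2 - 4 * (2 * α - 1) * s * t)) ^ 2
      = α ^ 2 * (s + t) ^ 2 - 4 * (2 * α - 1) * s * t :=
  Real.sq_sqrt (discr_nonneg hs ht)

lemma rQ_symm (α s t : ℝ) : rQ α s t = rQ α t s := by
  unfold rQ; ring_nf

lemma rQ_quad {α s t : ℝ} (hs : 0 ≤ s) (ht : 0 ≤ t) :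
    (rQ α s t - α * s) * (rQ α s t - α * t) = (1 - α) ^ 2 * s * t := by
  have h := sqrt_discr_sq (α := α) hs ht
  unfold rQ
  nlinarith [h]

lemma rQ_ge_left {α s t : ℝ} (hα : 0 ≤ α) (hs : 0 ≤ s) (ht : 0 ≤ t) :
    α * s ≤ rQ α s t := by
  have h := sqrt_discr_sq (α := α) hs ht
  have h0 : 0 ≤ Real.sqrt (α ^ 2 * (s + t) ^ 2 - 4 * (2 * α - 1) * s * t) := Real.sqrt_nonneg _
  have key : α * (s - t) ≤ Real.sqrt (α ^ 2 * (s + t) ^ 2 - 4 * (2 * α - 1) * s * t) := by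
    rcases le_or_gt (α * (s - t)) 0 with h1 | h1
    · linarith
    · nlinarith [sq_nonneg (1 - α), mul_nonneg hs ht, mul_nonneg hα (mul_nonneg hs ht)]
  unfold rQ; nlinarith

lemma rQ_ge_right {α s t : ℝ} (hα : 0 ≤ α) (hs : 0 ≤ s) (ht : 0 ≤ t) :
    α * t ≤ rQ α s t := by
  have := rQ_ge_left hα ht hs
  have e : rQ α t s = rQ α s t := by unfold rQ; ring_nf
  linarith [e ▸ this]

lemma le_rQ {α s t μ : ℝ} (hs : 0 ≤ s) (ht : 0 ≤ t)
    (h1 : α * s ≤ μ) (h2 : α * t ≤ μ)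
    (h3 : (1 - α) ^ 2 * s * t ≤ (μ - α * s) * (μ - α * t)) :
    rQ α s t ≤ μ := by
  have h := sqrt_discr_sq (α := α) hs ht
  have h0 : 0 ≤ Real.sqrt (α ^ 2 * (s + t) ^ 2 - 4 * (2 * α - 1) * s * t) := Real.sqrt_nonneg _
  have key : Real.sqrt (α ^ 2 * (s + t) ^ 2 - 4 * (2 * α - 1) * s * t) ≤ 2 * μ - α * (s + t) := by
    nlinarith
  unfold rQ; linarith

lemma rQ_mono {α s t s' t' : ℝ} (hα : 0 ≤ α) (hs : 0 ≤ s) (ht : 0 ≤ t)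
    (hss : s ≤ s') (htt : t ≤ t') : rQ α s t ≤ rQ α s' t' := by
  have hs' : (0:ℝ) ≤ s' := le_trans hs hss
  have ht' : (0:ℝ) ≤ t' := le_trans ht htt
  refine le_rQ hs ht ?_ ?_ ?_
  · exact le_trans (by nlinarith) (rQ_ge_left hα hs' ht')
  · exact le_trans (by nlinarith) (rQ_ge_right hα hs' ht')
  · have hq := rQ_quad (α := α) hs' ht'
    have g1 : 0 ≤ rQ α s' t' - α * s' := by linarith [rQ_ge_left hα hs' ht']
    have g2 : 0 ≤ rQ α s' t' - α * t' := by linarith [rQ_ge_right hα hs' ht']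
    have hmul : s * t ≤ s' * t' := mul_le_mul hss htt ht hs'
    have h2 : (1 - α) ^ 2 * (s * t) ≤ (1 - α) ^ 2 * (s' * t') :=
      mul_le_mul_of_nonneg_left hmul (sq_nonneg _)
    have h3 : (rQ α s' t' - α * s') * (rQ α s' t' - α * t')
        ≤ (rQ α s' t' - α * s) * (rQ α s' t' - α * t) := by
      apply mul_le_mul (by nlinarith) (by nlinarith) g2 (by nlinarith)
    nlinarith

lemma rQ_eq_of_eq {α s t s₀ t₀ : ℝ} (hα : 0 ≤ α) (hα1 : α < 1)
    (hs₀ : 0 < s₀) (ht₀ : 0 < t₀) (hss : s₀ ≤ s) (htt : t₀ ≤ t)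
    (heq : rQ α s t = rQ α s₀ t₀) : s = s₀ ∧ t = t₀ := by
  set μ := rQ α s t with hμ
  have hs : (0:ℝ) ≤ s := le_trans hs₀.le hss
  have ht : (0:ℝ) ≤ t := le_trans ht₀.le htt
  have q1 : (μ - α * s) * (μ - α * t) = (1 - α) ^ 2 * s * t := rQ_quad hs ht
  have q2 : (μ - α * s₀) * (μ - α * t₀) = (1 - α) ^ 2 * s₀ * t₀ := by
    rw [heq]; exact rQ_quad hs₀.le ht₀.le
  have g1 : α * s ≤ μ := rQ_ge_left hα hs ht
  have g2 : α * t ≤ μ := rQ_ge_right hα hs ht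
  have h1α : 0 < (1 - α) ^ 2 := pow_pos (by linarith) 2
  have ht₀μ : α * t₀ ≤ μ := le_trans (by nlinarith) g2
  have key : (s - s₀) * (α * (μ - α * t₀) + (1 - α) ^ 2 * t₀)
      + (t - t₀) * (α * (μ - α * s) + (1 - α) ^ 2 * s) = 0 := by nlinarith
  have p1 : 0 ≤ (s - s₀) * (α * (μ - α * t₀) + (1 - α) ^ 2 * t₀) := by
    apply mul_nonneg (by linarith)
    have : 0 ≤ α * (μ - α * t₀) := mul_nonneg hα (by linarith)
    nlinarith
  have p2 : 0 ≤ (t - t₀) * (α * (μ - α * s) + (1 - α) ^ 2 * s) := by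
    apply mul_nonneg (by linarith)
    have : 0 ≤ α * (μ - α * s) := mul_nonneg hα (by linarith)
    nlinarith
  have hz1 : (s - s₀) * (α * (μ - α * t₀) + (1 - α) ^ 2 * t₀) = 0 := by linarith
  have hpos1 : 0 < α * (μ - α * t₀) + (1 - α) ^ 2 * t₀ := by
    have : 0 ≤ α * (μ - α * t₀) := mul_nonneg hα (by linarith)
    nlinarith
  have hs_eq : s = s₀ := by
    rcases mul_eq_zero.mp hz1 with h | h
    · linarith
    · linarith
  have hz2 : (t - t₀) * (α * (μ - α * s) + (1 - α) ^ 2 * s) = 0 := by linarith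
  have hpos2 : 0 < α * (μ - α * s) + (1 - α) ^ 2 * s := by
    have : 0 ≤ α * (μ - α * s) := mul_nonneg hα (by linarith)
    nlinarith
  have ht_eq : t = t₀ := by
    rcases mul_eq_zero.mp hz2 with h | h
    · linarith
    · linarith
  exact ⟨hs_eq, ht_eq⟩

lemma rQ_diag {α a : ℝ} (hα : 0 ≤ α) (hα1 : α < 1) (ha : 0 ≤ a) : rQ α a a = a := by
  have : α ^ 2 * (a + a) ^ 2 - 4 * (2 * α - 1) * a * a = (2 * a * (1 - α)) ^ 2 := by ring
  unfold rQ
  rw [this, Real.sqrt_sq (by nlinarith)]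
  ring

/-! ### Graph distance/transmission lemmas -/

/-- auxiliary comparison function -/
noncomputable def gfun (G : SimpleGraph V) [DecidableRel G.Adj] (w z : V) : ℝ :=
  (if z = w then (0:ℝ) else 2) - (if G.Adj w z then (1:ℝ) else 0)

lemma gfun_sum (G : SimpleGraph V) [DecidableRel G.Adj] (w : V) :
    ∑ z, gfun G w z = 2 * (Fintype.card V : ℝ) - 2 - G.degree w := by
  unfold gfun
  rw [Finset.sum_sub_distrib]
  have h1 : ∑ z, (if z = w then (0:ℝ) else 2) = 2 * (Fintype.card V : ℝ) - 2 := by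
    have hpt : ∀ z, (if z = w then (0:ℝ) else 2) = 2 - (if z = w then (2:ℝ) else 0) := by
      intro z; by_cases h : z = w <;> simp [h]
    rw [Finset.sum_congr rfl fun z _ => hpt z, Finset.sum_sub_distrib, Finset.sum_const,
      Finset.sum_ite_eq' Finset.univ w (fun _ => (2:ℝ)), if_pos (Finset.mem_univ w),
      Finset.card_univ, nsmul_eq_mul]
    ring
  have h2 : ∑ z, (if G.Adj w z then (1:ℝ) else 0) = G.degree w := by
    rw [Finset.sum_boole]
    norm_cast
    rw [← SimpleGraph.card_neighborFinset_eq_degree, SimpleGraph.neighborFinset_eq_filter]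
  rw [h1, h2]

lemma gfun_le (G : SimpleGraph V) [DecidableRel G.Adj] (hG : G.Connected) (w z : V) :
    gfun G w z ≤ (G.dist w z : ℝ) := by
  unfold gfun
  by_cases hzw : z = w
  · subst hzw; simp [SimpleGraph.dist_self]
  · by_cases hadj : G.Adj w z
    · rw [if_neg hzw, if_pos hadj, (SimpleGraph.dist_eq_one_iff_adj.mpr hadj)]
      norm_num
    · rw [if_neg hzw, if_neg hadj]
      have h1 : 0 < G.dist w z := hG.pos_dist_of_ne (Ne.symm hzw)
      have h2 : G.dist w z ≠ 1 := fun h => hadj (SimpleGraph.dist_eq_one_iff_adj.mp h)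
      have : 2 ≤ G.dist w z := by omega
      have := (Nat.cast_le (α := ℝ)).mpr this
      push_cast at this ⊢
      linarith

lemma transmission_ge (G : SimpleGraph V) [DecidableRel G.Adj] (hG : G.Connected) (w : V) :
    2 * (Fintype.card V : ℝ) - 2 - G.degree w ≤ transmission G w := by
  rw [← gfun_sum G w]
  exact Finset.sum_le_sum fun z _ => gfun_le G hG w z

lemma transmission_eq_of_dist_le_two (G : SimpleGraph V) [DecidableRel G.Adj]
    (hG : G.Connected) (w : V) (h2 : ∀ z, G.dist w z ≤ 2) :
    transmission G w = 2 * (Fintype.card V : ℝ) - 2 - G.degree w := by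
  rw [← gfun_sum G w]
  apply Finset.sum_congr rfl
  intro z _
  unfold gfun
  by_cases hzw : z = w
  · subst hzw; simp [SimpleGraph.dist_self]
  · by_cases hadj : G.Adj w z
    · rw [if_neg hzw, if_pos hadj, (SimpleGraph.dist_eq_one_iff_adj.mpr hadj)]
      norm_num
    · rw [if_neg hzw, if_neg hadj]
      have h1 : 0 < G.dist w z := hG.pos_dist_of_ne (Ne.symm hzw)
      have hne1 : G.dist w z ≠ 1 := fun h => hadj (SimpleGraph.dist_eq_one_iff_adj.mp h)
      have : G.dist w z = 2 := by have := h2 z; omega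
      rw [this]; norm_num

lemma dist_le_two_of_transmission_eq (G : SimpleGraph V) [DecidableRel G.Adj]
    (hG : G.Connected) (w : V)
    (heq : transmission G w = 2 * (Fintype.card V : ℝ) - 2 - G.degree w) (z : V) :
    G.dist w z ≤ 2 := by
  have hsum : ∑ z, gfun G w z = ∑ z, (G.dist w z : ℝ) := by
    rw [gfun_sum G w]; exact heq.symm
  have hpt := (Finset.sum_eq_sum_iff_of_le (fun z _ => gfun_le G hG w z)).mp hsum
  have hz := hpt z (Finset.mem_univ z)
  by_cases hzw : z = w
  · subst hzw; rw [SimpleGraph.dist_self]; norm_num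
  · by_cases hadj : G.Adj w z
    · rw [SimpleGraph.dist_eq_one_iff_adj.mpr hadj]; norm_num
    · unfold gfun at hz
      rw [if_neg hzw, if_neg hadj] at hz
      have : (G.dist w z : ℝ) = 2 := by linarith
      exact_mod_cast le_of_eq this

lemma transmission_nonneg (G : SimpleGraph V) (w : V) : 0 ≤ transmission G w :=
  Finset.sum_nonneg fun z _ => by positivity

lemma degree_le_bound (G : SimpleGraph V) [DecidableRel G.Adj] (w : V) :
    (G.degree w : ℝ) ≤ (Fintype.card V : ℝ) - 1 := by
  have h := G.degree_lt_card_verts w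
  have : (G.degree w : ℝ) + 1 ≤ (Fintype.card V : ℝ) := by exact_mod_cast h
  linarith

/-! ### Spectral lemmas for real symmetric matrices -/

lemma smul_one_sub_psd {A : Matrix V V ℝ} (hA : A.IsHermitian) {c : ℝ}
    (hc : ∀ i, hA.eigenvalues i ≤ c) : (c • (1 : Matrix V V ℝ) - A).PosSemidef := by
  have hU : (hA.eigenvectorUnitary : Matrix V V ℝ) * star (hA.eigenvectorUnitary : Matrix V V ℝ)
      = 1 := (Matrix.mem_unitaryGroup_iff).mp hA.eigenvectorUnitary.2
  have key : c • (1 : Matrix V V ℝ) - A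
      = (hA.eigenvectorUnitary : Matrix V V ℝ)
        * Matrix.diagonal (fun i => c - hA.eigenvalues i)
        * (hA.eigenvectorUnitary : Matrix V V ℝ)ᴴ := by
    have h1 : Matrix.diagonal (fun i => c - hA.eigenvalues i)
        = c • (1 : Matrix V V ℝ) - Matrix.diagonal (RCLike.ofReal ∘ hA.eigenvalues) := by
      rw [smul_one_eq_diagonal, ← Matrix.diagonal_sub, RCLike.ofReal_real_eq_id]
      simp
    rw [h1, Matrix.mul_sub, Matrix.sub_mul, ← Matrix.star_eq_conjTranspose]
    conv_lhs => rw [hA.spectral_theorem]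
    simp only [Unitary.conjStarAlgAut_apply, Unitary.coe_star]
    congr 1
    rw [Matrix.mul_smul, Matrix.smul_mul, mul_one, hU]
  rw [key]
  exact (Matrix.posSemidef_diagonal_iff.mpr fun i => sub_nonneg.mpr (hc i)
    ).mul_mul_conjTranspose_same _

lemma psd_rayleigh {N : Matrix V V ℝ} (hN : N.PosSemidef) (y : V → ℝ) :
    0 ≤ y ⬝ᵥ N *ᵥ y := by
  simpa using hN.dotProduct_mulVec_nonneg y

lemma rayleigh_le {A : Matrix V V ℝ} {c : ℝ}
    (hpsd : (c • (1 : Matrix V V ℝ) - A).PosSemidef) (y : V → ℝ) :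
    y ⬝ᵥ A *ᵥ y ≤ c * (y ⬝ᵥ y) := by
  have h := psd_rayleigh hpsd y
  rw [Matrix.sub_mulVec, Matrix.smul_mulVec, Matrix.one_mulVec, dotProduct_sub,
    dotProduct_smul] at h
  simp only [smul_eq_mul] at h
  linarith

lemma eigen_of_rayleigh_eq {A : Matrix V V ℝ} {c : ℝ}
    (hpsd : (c • (1 : Matrix V V ℝ) - A).PosSemidef) {y : V → ℝ}
    (heq : y ⬝ᵥ A *ᵥ y = c * (y ⬝ᵥ y)) : A *ᵥ y = c • y := by
  have h0 : star y ⬝ᵥ (c • (1 : Matrix V V ℝ) - A) *ᵥ y = 0 := by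
    rw [star_trivial, Matrix.sub_mulVec, Matrix.smul_mulVec, Matrix.one_mulVec,
      dotProduct_sub, dotProduct_smul, smul_eq_mul, heq]
    ring
  have := (hpsd.dotProduct_mulVec_zero_iff y).mp h0
  rw [Matrix.sub_mulVec, Matrix.smul_mulVec, Matrix.one_mulVec, sub_eq_zero] at this
  exact this.symm

lemma mem_spectrum_of_eigenvec (A : Matrix V V ℝ) {c : ℝ} {v : V → ℝ} (hv : v ≠ 0)
    (he : A *ᵥ v = c • v) : c ∈ spectrum ℝ A := by
  rw [spectrum.mem_iff]
  intro h
  rw [Matrix.isUnit_iff_isUnit_det, isUnit_iff_ne_zero] at h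
  apply h
  rw [← Matrix.exists_mulVec_eq_zero_iff]
  refine ⟨v, hv, ?_⟩
  rw [Algebra.algebraMap_eq_smul_one, Matrix.sub_mulVec, Matrix.smul_mulVec,
    Matrix.one_mulVec, he, sub_self]

lemma spectrum_le {A : Matrix V V ℝ} {c : ℝ}
    (hpsd : (c • (1 : Matrix V V ℝ) - A).PosSemidef) {lam : ℝ} (hlam : lam ∈ spectrum ℝ A) :
    lam ≤ c := by
  rw [spectrum.mem_iff, Matrix.isUnit_iff_isUnit_det, isUnit_iff_ne_zero, not_not,
    ← Matrix.exists_mulVec_eq_zero_iff] at hlam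
  obtain ⟨v, hv, hveq⟩ := hlam
  rw [Algebra.algebraMap_eq_smul_one, Matrix.sub_mulVec, Matrix.smul_mulVec,
    Matrix.one_mulVec, sub_eq_zero] at hveq
  have hray := rayleigh_le hpsd v
  rw [hveq.symm] at hray
  rw [dotProduct_smul, smul_eq_mul] at hray
  have hvv : 0 < v ⬝ᵥ v := by
    have h1 : 0 ≤ v ⬝ᵥ v := Finset.sum_nonneg fun i _ => mul_self_nonneg (v i)
    rcases h1.lt_or_eq with h | h
    · exact h
    · exact absurd (dotProduct_self_eq_zero.mp h.symm) hv
  exact le_of_mul_le_mul_right (by linarith) hvv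

lemma eigen_le_max_rowsum {A : Matrix V V ℝ} (hnn : ∀ u v, 0 ≤ A u v) {lam : ℝ} {v : V → ℝ}
    (hv : v ≠ 0) (he : A *ᵥ v = lam • v) {c : ℝ} (hc : ∀ u, ∑ w, A u w ≤ c) (hc0 : 0 ≤ c) :
    lam ≤ c := by
  have : Nonempty V := ⟨(Function.ne_iff.mp hv).choose⟩
  obtain ⟨p, _, hp'⟩ := Finset.exists_max_image Finset.univ (fun p => |v p|)
    Finset.univ_nonempty
  have hp : ∀ w, |v w| ≤ |v p| := fun w => hp' w (Finset.mem_univ w)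
  have hvp : 0 < |v p| := by
    obtain ⟨q, hq⟩ := Function.ne_iff.mp hv
    exact lt_of_lt_of_le (abs_pos.mpr hq) (hp q)
  rcases le_or_gt lam 0 with h | h
  · linarith
  · have key : lam * |v p| ≤ c * |v p| := by
      have h1 : lam * |v p| = |(A *ᵥ v) p| := by
        rw [he]; simp [abs_mul, abs_of_pos h]
      have h2 : |(A *ᵥ v) p| ≤ ∑ w, A p w * |v w| := by
        rw [Matrix.mulVec, dotProduct]
        refine le_trans (Finset.abs_sum_le_sum_abs _ _) ?_
        apply Finset.sum_le_sum
        intro w _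
        rw [abs_mul, abs_of_nonneg (hnn p w)]
      have h3 : ∑ w, A p w * |v w| ≤ ∑ w, A p w * |v p| :=
        Finset.sum_le_sum fun w _ => mul_le_mul_of_nonneg_left (hp w) (hnn p w)
      have h4 : ∑ w, A p w * |v p| = (∑ w, A p w) * |v p| := by
        rw [Finset.sum_mul]
      have h5 : (∑ w, A p w) * |v p| ≤ c * |v p| :=
        mul_le_mul_of_nonneg_right (hc p) hvp.le
      linarith
    exact le_of_mul_le_mul_right key hvp

/-! ### Entry-level lemmas about `Dalpha` -/

lemma Dalpha_isHermitian (G : SimpleGraph V) (α : ℝ) : (Dalpha G α).IsHermitian := by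
  have : (Dalpha G α)ᴴ = Dalpha G α := by
    ext u v
    simp only [conjTranspose_apply, Dalpha, Matrix.add_apply, Matrix.smul_apply, distMatrix,
      Matrix.diagonal_apply, star_trivial, smul_eq_mul]
    rw [SimpleGraph.dist_comm]
    by_cases h : u = v
    · subst h; simp
    · rw [if_neg h, if_neg (Ne.symm h)]
  exact this

lemma Dalpha_apply_self (G : SimpleGraph V) (α : ℝ) (u : V) :
    Dalpha G α u u = α * transmission G u := by
  simp [Dalpha, Matrix.add_apply, Matrix.diagonal_apply, distMatrix, SimpleGraph.dist_self]

lemma Dalpha_apply_ne (G : SimpleGraph V) (α : ℝ) {u v : V} (h : u ≠ v) :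
    Dalpha G α u v = (1 - α) * (G.dist u v : ℝ) := by
  simp [Dalpha, Matrix.add_apply, Matrix.diagonal_apply, distMatrix, if_neg h]

lemma Dalpha_nonneg (G : SimpleGraph V) {α : ℝ} (hα0 : 0 ≤ α) (hα1 : α < 1) (u v : V) :
    0 ≤ Dalpha G α u v := by
  by_cases h : u = v
  · subst h; rw [Dalpha_apply_self]; exact mul_nonneg hα0 (transmission_nonneg G u)
  · rw [Dalpha_apply_ne G α h]
    exact mul_nonneg (by linarith) (by positivity)

lemma Dalpha_pos_of_ne (G : SimpleGraph V) (hG : G.Connected) {α : ℝ} (hα1 : α < 1)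
    {u v : V} (h : u ≠ v) : 0 < Dalpha G α u v := by
  rw [Dalpha_apply_ne G α h]
  have := hG.pos_dist_of_ne h
  have : (0:ℝ) < G.dist u v := by exact_mod_cast this
  nlinarith

lemma Dalpha_rowsum (G : SimpleGraph V) (α : ℝ) (u : V) :
    ∑ v, Dalpha G α u v = transmission G u := by
  have h1 : ∑ v, Matrix.diagonal (transmission G) u v = transmission G u := by
    simp only [Matrix.diagonal_apply]
    rw [Finset.sum_ite_eq Finset.univ u (fun _ => transmission G u)]
    simp
  have h2 : ∑ v, distMatrix G u v = transmission G u := rfl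
  simp only [Dalpha, Matrix.add_apply, Matrix.smul_apply, smul_eq_mul, Finset.sum_add_distrib,
    ← Finset.mul_sum]
  rw [h1, h2]; ring

/-- Key eigenvector inequality at a vertex. -/
lemma eig_vertex_ineq (G : SimpleGraph V) (hG : G.Connected) {α : ℝ} (hα0 : 0 ≤ α) (hα1 : α < 1)
    {μ : ℝ} {y : V → ℝ} (hye : (Dalpha G α) *ᵥ y = μ • y) (p : V) {c : ℝ} (hc : 0 ≤ c)
    (hcy : ∀ w, w ≠ p → c ≤ y w) :
    (1 - α) * transmission G p * c ≤ (μ - α * transmission G p) * y p := by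
  have hp : ∑ w, Dalpha G α p w * y w = μ * y p := by
    have := congrFun hye p
    simpa [Matrix.mulVec, dotProduct] using this
  have hsplit : ∑ w, Dalpha G α p w * y w
      = Dalpha G α p p * y p + ∑ w ∈ Finset.univ.erase p, Dalpha G α p w * y w := by
    rw [← Finset.add_sum_erase _ _ (Finset.mem_univ p)]
  have hers : ∑ w ∈ Finset.univ.erase p, Dalpha G α p w = (1 - α) * transmission G p := by
    have := Dalpha_rowsum G α p
    rw [← Finset.add_sum_erase _ _ (Finset.mem_univ p)] at this
    rw [Dalpha_apply_self] at this
    linarith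
  have hlow : (1 - α) * transmission G p * c
      ≤ ∑ w ∈ Finset.univ.erase p, Dalpha G α p w * y w := by
    rw [← hers, Finset.sum_mul]
    apply Finset.sum_le_sum
    intro w hw
    exact mul_le_mul_of_nonneg_left (hcy w (Finset.ne_of_mem_erase hw))
      (Dalpha_nonneg G hα0 hα1 p w)
  rw [hsplit, Dalpha_apply_self] at hp
  linarith

/-- Equality in the key inequality forces the eigenvector entries to be equal off `p`. -/
lemma eig_vertex_eq (G : SimpleGraph V) (hG : G.Connected) {α : ℝ} (hα0 : 0 ≤ α) (hα1 : α < 1)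
    {μ : ℝ} {y : V → ℝ} (hye : (Dalpha G α) *ᵥ y = μ • y) (p : V) {c : ℝ} (hc : 0 ≤ c)
    (hcy : ∀ w, w ≠ p → c ≤ y w)
    (heq : (μ - α * transmission G p) * y p = (1 - α) * transmission G p * c) :
    ∀ w, w ≠ p → y w = c := by
  have hp : ∑ w, Dalpha G α p w * y w = μ * y p := by
    have := congrFun hye p
    simpa [Matrix.mulVec, dotProduct] using this
  have hsplit : ∑ w, Dalpha G α p w * y w
      = Dalpha G α p p * y p + ∑ w ∈ Finset.univ.erase p, Dalpha G α p w * y w := by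
    rw [← Finset.add_sum_erase _ _ (Finset.mem_univ p)]
  have hers : ∑ w ∈ Finset.univ.erase p, Dalpha G α p w = (1 - α) * transmission G p := by
    have := Dalpha_rowsum G α p
    rw [← Finset.add_sum_erase _ _ (Finset.mem_univ p)] at this
    rw [Dalpha_apply_self] at this
    linarith
  have hsum_eq : ∑ w ∈ Finset.univ.erase p, Dalpha G α p w * c
      = ∑ w ∈ Finset.univ.erase p, Dalpha G α p w * y w := by
    rw [← Finset.sum_mul, hers]
    rw [hsplit, Dalpha_apply_self] at hp
    linarith
  have hpt := (Finset.sum_eq_sum_iff_of_le (fun w hw =>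
    mul_le_mul_of_nonneg_left (hcy w (Finset.ne_of_mem_erase hw))
      (Dalpha_nonneg G hα0 hα1 p w))).mp hsum_eq
  intro w hw
  have := hpt w (Finset.mem_erase.mpr ⟨hw, Finset.mem_univ w⟩)
  have hMpw : 0 < Dalpha G α p w := Dalpha_pos_of_ne G hG hα1 (Ne.symm hw)
  exact (mul_left_cancel₀ hMpw.ne' this).symm


set_option maxHeartbeats 1600000 in
/-- Main engine: the bound together with the equality characterisation. -/
lemma engine (G : SimpleGraph V) [DecidableRel G.Adj] (hG : G.Connected)
    (hn : 2 ≤ Fintype.card V) {α : ℝ} (hα0 : 0 ≤ α) (hα1 : α < 1) (Δ Δ' : ℕ) (u₀ : V)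
    (hu₀ : G.degree u₀ = Δ) (hΔ : ∀ w, G.degree w ≤ Δ)
    (hΔ'exists : ∃ v₀, v₀ ≠ u₀ ∧ G.degree v₀ = Δ')
    (hΔ' : ∀ w, w ≠ u₀ → G.degree w ≤ Δ') :
    rQ α (2 * (Fintype.card V : ℝ) - 2 - Δ) (2 * (Fintype.card V : ℝ) - 2 - Δ')
      ≤ muAlpha G α ∧
    (muAlpha G α
        = rQ α (2 * (Fintype.card V : ℝ) - 2 - Δ) (2 * (Fintype.card V : ℝ) - 2 - Δ') ↔
      ((∀ w z : V, G.degree w = G.degree z) ∧ ∀ w z : V, G.dist w z ≤ 2)) := by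
  classical
  have hne : Nonempty V := Fintype.card_pos_iff.mp (by omega)
  set aR : ℝ := 2 * (Fintype.card V : ℝ) - 2 - (Δ:ℝ) with haR
  set bR : ℝ := 2 * (Fintype.card V : ℝ) - 2 - (Δ':ℝ) with hbR
  have hcard2 : (2:ℝ) ≤ (Fintype.card V : ℝ) := by exact_mod_cast hn
  have hΔcard : (Δ:ℝ) ≤ (Fintype.card V : ℝ) - 1 := by
    rw [← hu₀]; push_cast; exact degree_le_bound G u₀
  have hΔΔ' : (Δ':ℝ) ≤ (Δ:ℝ) := by
    obtain ⟨v₀, _, hv₀⟩ := hΔ'exists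
    have := hΔ v₀
    rw [hv₀] at this
    exact_mod_cast this
  have haRpos : 0 < aR := by rw [haR]; linarith
  have hbRpos : 0 < bR := by rw [hbR]; linarith
  have hab : aR ≤ bR := by rw [haR, hbR]; linarith
  -- spectral setup
  have hM : (Dalpha G α).IsHermitian := Dalpha_isHermitian G α
  obtain ⟨j, _, hjmax⟩ := Finset.exists_max_image Finset.univ hM.eigenvalues Finset.univ_nonempty
  have hj : ∀ i, hM.eigenvalues i ≤ hM.eigenvalues j := fun i => hjmax i (Finset.mem_univ i)
  set μ : ℝ := hM.eigenvalues j with hμdef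
  have hpsd : (μ • (1 : Matrix V V ℝ) - Dalpha G α).PosSemidef := smul_one_sub_psd hM hj
  have hspec_mem : μ ∈ spectrum ℝ (Dalpha G α) := hM.eigenvalues_mem_spectrum_real j
  have hbdd : BddAbove (spectrum ℝ (Dalpha G α)) := ⟨μ, fun lam hlam => spectrum_le hpsd hlam⟩
  have hmu_eq : muAlpha G α = μ := by
    unfold muAlpha
    exact le_antisymm (csSup_le ⟨μ, hspec_mem⟩ fun lam hlam => spectrum_le hpsd hlam)
      (le_csSup hbdd hspec_mem)
  have hM_nonneg : ∀ u v, 0 ≤ Dalpha G α u v := fun u v => Dalpha_nonneg G hα0 hα1 u v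
  -- Perron-type eigenvector
  set x : V → ℝ := ⇑(hM.eigenvectorBasis j) with hxdef
  have hxev : Dalpha G α *ᵥ x = μ • x := hM.mulVec_eigenvectorBasis j
  have hx0 : x ≠ 0 := by
    intro h
    apply hM.eigenvectorBasis.orthonormal.ne_zero j
    ext i
    exact congrFun h i
  set y : V → ℝ := fun w => |x w| with hydef
  have hy0 : ∀ w, 0 ≤ y w := fun w => abs_nonneg _
  have hyy : y ⬝ᵥ y = x ⬝ᵥ x := by
    simp only [dotProduct, hydef, abs_mul_abs_self]
  have hxMx : x ⬝ᵥ Dalpha G α *ᵥ x = μ * (x ⬝ᵥ x) := by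
    rw [hxev, dotProduct_smul, smul_eq_mul]
  have hyMy_ge : x ⬝ᵥ Dalpha G α *ᵥ x ≤ y ⬝ᵥ Dalpha G α *ᵥ y := by
    simp only [dotProduct, Matrix.mulVec]
    apply Finset.sum_le_sum
    intro u _
    rw [Finset.mul_sum, Finset.mul_sum]
    apply Finset.sum_le_sum
    intro v _
    calc x u * (Dalpha G α u v * x v) ≤ |x u * (Dalpha G α u v * x v)| := le_abs_self _
      _ = y u * (Dalpha G α u v * y v) := by
          show _ = |x u| * (Dalpha G α u v * |x v|)
          rw [abs_mul, abs_mul, abs_of_nonneg (hM_nonneg u v)]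
  have hyMy : y ⬝ᵥ Dalpha G α *ᵥ y = μ * (y ⬝ᵥ y) := by
    have h1 := rayleigh_le hpsd y
    have h2 : μ * (y ⬝ᵥ y) ≤ y ⬝ᵥ Dalpha G α *ᵥ y := by
      rw [hyy, ← hxMx]; exact hyMy_ge
    linarith
  have hye : Dalpha G α *ᵥ y = μ • y := eigen_of_rayleigh_eq hpsd hyMy
  have hyne : y ≠ 0 := by
    obtain ⟨q, hq⟩ := Function.ne_iff.mp hx0
    intro h
    exact hq (abs_eq_zero.mp (congrFun h q))
  have hypos : ∀ w, 0 < y w := by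
    intro w
    rcases (hy0 w).lt_or_eq with h | h
    · exact h
    · exfalso
      have hyp : y w = 0 := h.symm
      have h0 : ∑ z, Dalpha G α w z * y z = 0 := by
        have := congrFun hye w
        simp only [Matrix.mulVec, dotProduct, Pi.smul_apply, smul_eq_mul] at this
        rw [this, hyp, mul_zero]
      have hall := (Finset.sum_eq_zero_iff_of_nonneg
        (fun z _ => mul_nonneg (hM_nonneg w z) (hy0 z))).mp h0
      apply hyne
      funext z
      rcases eq_or_ne z w with rfl | hzw
      · exact hyp
      · have h' := hall z (Finset.mem_univ z)
        have hMwz : 0 < Dalpha G α w z := Dalpha_pos_of_ne G hG hα1 (Ne.symm hzw)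
        rcases mul_eq_zero.mp h' with h'' | h''
        · exact absurd h'' hMwz.ne'
        · exact h''
  -- αT_u ≤ μ
  have hT_le_mu : ∀ u, α * transmission G u ≤ μ := by
    intro u
    have h := rayleigh_le hpsd (Pi.single u 1)
    have h1 : (Pi.single u 1 : V → ℝ) ⬝ᵥ Dalpha G α *ᵥ Pi.single u 1 = Dalpha G α u u := by
      rw [Matrix.mulVec_single]
      simp [dotProduct, Pi.single_apply]
    have h2 : (Pi.single u 1 : V → ℝ) ⬝ᵥ Pi.single u 1 = 1 := by
      simp [dotProduct, Pi.single_apply]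
    rw [h1, h2, mul_one, Dalpha_apply_self] at h
    exact h
  -- min entries
  obtain ⟨pmin, _, hpmin'⟩ := Finset.exists_min_image Finset.univ y Finset.univ_nonempty
  have hpmin : ∀ w, y pmin ≤ y w := fun w => hpmin' w (Finset.mem_univ w)
  have herase_ne : (Finset.univ.erase pmin).Nonempty := by
    rw [← Finset.card_pos, Finset.card_erase_of_mem (Finset.mem_univ pmin), Finset.card_univ]
    omega
  obtain ⟨p', hp'mem, hp'min'⟩ := Finset.exists_min_image (Finset.univ.erase pmin) y herase_ne
  have hp'ne : p' ≠ pmin := Finset.ne_of_mem_erase hp'mem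
  have hp'min : ∀ w, w ≠ pmin → y p' ≤ y w := fun w hw =>
    hp'min' w (Finset.mem_erase.mpr ⟨hw, Finset.mem_univ w⟩)
  -- transmission lower bounds
  have hT_a : ∀ w, aR ≤ transmission G w := by
    intro w
    refine le_trans ?_ (transmission_ge G hG w)
    have : (G.degree w : ℝ) ≤ (Δ:ℝ) := by exact_mod_cast hΔ w
    rw [haR]; linarith
  have hT_b : ∀ w, w ≠ u₀ → bR ≤ transmission G w := by
    intro w hw
    refine le_trans ?_ (transmission_ge G hG w)
    have : (G.degree w : ℝ) ≤ (Δ':ℝ) := by exact_mod_cast hΔ' w hw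
    rw [hbR]; linarith
  obtain ⟨s₀, t₀, hperm, hss, htt⟩ :
      ∃ s₀ t₀, ((s₀ = aR ∧ t₀ = bR) ∨ (s₀ = bR ∧ t₀ = aR))
        ∧ s₀ ≤ transmission G pmin ∧ t₀ ≤ transmission G p' := by
    rcases eq_or_ne pmin u₀ with h | h
    · refine ⟨aR, bR, Or.inl ⟨rfl, rfl⟩, hT_a pmin, hT_b p' ?_⟩
      rw [← h]; exact hp'ne
    · exact ⟨bR, aR, Or.inr ⟨rfl, rfl⟩, hT_b pmin h, hT_a p'⟩
  have hs₀pos : 0 < s₀ := by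
    rcases hperm with ⟨h1, _⟩ | ⟨h1, _⟩ <;> rw [h1]
    · exact haRpos
    · exact hbRpos
  have ht₀pos : 0 < t₀ := by
    rcases hperm with ⟨_, h1⟩ | ⟨_, h1⟩ <;> rw [h1]
    · exact hbRpos
    · exact haRpos
  have hspos : 0 < transmission G pmin := lt_of_lt_of_le hs₀pos hss
  have htpos : 0 < transmission G p' := lt_of_lt_of_le ht₀pos htt
  have hrQ_perm : rQ α s₀ t₀ = rQ α aR bR := by
    rcases hperm with ⟨h1, h2⟩ | ⟨h1, h2⟩ <;> rw [h1, h2]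
    exact rQ_symm α bR aR
  -- the two key inequalities
  have I1 : (1 - α) * transmission G pmin * y p'
      ≤ (μ - α * transmission G pmin) * y pmin :=
    eig_vertex_ineq G hG hα0 hα1 hye pmin (hy0 p') hp'min
  have I2 : (1 - α) * transmission G p' * y pmin
      ≤ (μ - α * transmission G p') * y p' :=
    eig_vertex_ineq G hG hα0 hα1 hye p' (hy0 pmin) (fun w _ => hpmin w)
  have hI1pos : 0 < (1 - α) * transmission G pmin * y p' :=
    mul_pos (mul_pos (by linarith) hspos) (hypos p')
  have hI2pos : 0 < (1 - α) * transmission G p' * y pmin :=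
    mul_pos (mul_pos (by linarith) htpos) (hypos pmin)
  have key3 : (1 - α) ^ 2 * transmission G pmin * transmission G p'
      ≤ (μ - α * transmission G pmin) * (μ - α * transmission G p') := by
    have hprod : ((1 - α) * transmission G pmin * y p')
          * ((1 - α) * transmission G p' * y pmin)
        ≤ ((μ - α * transmission G pmin) * y pmin)
          * ((μ - α * transmission G p') * y p') :=
      mul_le_mul I1 I2 hI2pos.le (le_trans hI1pos.le I1)
    have hyy' : 0 < y pmin * y p' := mul_pos (hypos pmin) (hypos p')
    have eA : (1 - α) ^ 2 * transmission G pmin * transmission G p' * (y pmin * y p')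
        = ((1 - α) * transmission G pmin * y p')
          * ((1 - α) * transmission G p' * y pmin) := by ring
    have eB : (μ - α * transmission G pmin) * (μ - α * transmission G p') * (y pmin * y p')
        = ((μ - α * transmission G pmin) * y pmin)
          * ((μ - α * transmission G p') * y p') := by ring
    have h3 : (1 - α) ^ 2 * transmission G pmin * transmission G p' * (y pmin * y p')
        ≤ (μ - α * transmission G pmin) * (μ - α * transmission G p')
          * (y pmin * y p') := by rw [eA, eB]; exact hprod
    exact le_of_mul_le_mul_right h3 hyy'
  have hstep : rQ α s₀ t₀ ≤ rQ α (transmission G pmin) (transmission G p') :=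
    rQ_mono hα0 hs₀pos.le ht₀pos.le hss htt
  have hμ_ge_rst : rQ α (transmission G pmin) (transmission G p') ≤ μ :=
    le_rQ hspos.le htpos.le (hT_le_mu pmin) (hT_le_mu p') key3
  have hmain : rQ α aR bR ≤ μ := by
    rw [← hrQ_perm]; exact le_trans hstep hμ_ge_rst
  refine ⟨by rw [hmu_eq]; exact hmain, ?_, ?_⟩
  · -- equality ⇒ regular with diameter ≤ 2
    intro heqq
    have hμB : μ = rQ α aR bR := by rw [← hmu_eq]; exact heqq
    have h5 : rQ α (transmission G pmin) (transmission G p') = rQ α s₀ t₀ := by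
      rw [hrQ_perm]
      exact le_antisymm (by rw [← hμB]; exact hμ_ge_rst) (by rw [← hrQ_perm]; exact hstep)
    obtain ⟨hs_eq, ht_eq⟩ := rQ_eq_of_eq hα0 hα1 hs₀pos ht₀pos hss htt h5
    have hμst : μ = rQ α (transmission G pmin) (transmission G p') := by
      rw [h5, hrQ_perm, ← hμB]
    have hquad : (μ - α * transmission G pmin) * (μ - α * transmission G p')
        = (1 - α) ^ 2 * transmission G pmin * transmission G p' := by
      rw [hμst]; exact rQ_quad hspos.le htpos.le
    -- product equality forces each inequality to be an equality
    have hABeq : ((μ - α * transmission G pmin) * y pmin)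
          * ((μ - α * transmission G p') * y p')
        = ((1 - α) * transmission G pmin * y p')
          * ((1 - α) * transmission G p' * y pmin) := by
      linear_combination (y pmin * y p') * hquad
    have hBpos : 0 < (μ - α * transmission G p') * y p' := lt_of_lt_of_le hI2pos I2
    have t1 : 0 ≤ ((μ - α * transmission G pmin) * y pmin
        - (1 - α) * transmission G pmin * y p') * ((μ - α * transmission G p') * y p') :=
      mul_nonneg (by linarith) hBpos.le
    have t2 : 0 ≤ ((1 - α) * transmission G pmin * y p')
        * ((μ - α * transmission G p') * y p' - (1 - α) * transmission G p' * y pmin) :=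
      mul_nonneg hI1pos.le (by linarith)
    have hid : ((μ - α * transmission G pmin) * y pmin
          - (1 - α) * transmission G pmin * y p') * ((μ - α * transmission G p') * y p')
        + ((1 - α) * transmission G pmin * y p')
          * ((μ - α * transmission G p') * y p' - (1 - α) * transmission G p' * y pmin)
        = 0 := by linear_combination hABeq
    have e1 : (μ - α * transmission G pmin) * y pmin
        = (1 - α) * transmission G pmin * y p' := by
      have hz : ((μ - α * transmission G pmin) * y pmin
          - (1 - α) * transmission G pmin * y p') * ((μ - α * transmission G p') * y p') = 0 := by
        linarith
      rcases mul_eq_zero.mp hz with h | h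
      · linarith
      · exact absurd h hBpos.ne'
    have e2 : (μ - α * transmission G p') * y p'
        = (1 - α) * transmission G p' * y pmin := by
      have hz : ((1 - α) * transmission G pmin * y p')
          * ((μ - α * transmission G p') * y p' - (1 - α) * transmission G p' * y pmin) = 0 := by
        linarith
      rcases mul_eq_zero.mp hz with h | h
      · exact absurd h hI1pos.ne'
      · linarith
    have hyconst1 := eig_vertex_eq G hG hα0 hα1 hye pmin (hy0 p') hp'min e1
    have hyconst2 := eig_vertex_eq G hG hα0 hα1 hye p' (hy0 pmin) (fun w _ => hpmin w) e2
    -- transmissions are all equal to aR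
    have hTaR : ∀ w, transmission G w = aR := by
      have hμaR : μ = transmission G pmin → μ = transmission G p' →
          transmission G pmin = aR ∨ transmission G p' = aR := by
        intro hμs hμt
        rcases hperm with ⟨h1, _⟩ | ⟨_, h2⟩
        · left; rw [hs_eq, h1]
        · right; rw [ht_eq, h2]
      by_cases hcard3 : 3 ≤ Fintype.card V
      · -- three or more vertices: y is constant
        obtain ⟨w₀, hw₀p, hw₀p'⟩ : ∃ w₀, w₀ ≠ pmin ∧ w₀ ≠ p' := by
          by_contra hcon
          push_neg at hcon
          have hsub : (Finset.univ : Finset V) ⊆ {pmin, p'} := by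
            intro w _
            rcases eq_or_ne w pmin with rfl | hw
            · simp
            · simp [hcon w hw]
          have := Finset.card_le_card hsub
          rw [Finset.card_univ] at this
          have := le_trans this (Finset.card_insert_le pmin {p'})
          simp at this
          omega
        have hYpp : y pmin = y p' := by
          rw [← hyconst2 w₀ hw₀p', ← hyconst1 w₀ hw₀p]
        have hμs : μ = transmission G pmin := by
          have := e1
          rw [← hYpp] at this
          have h := mul_right_cancel₀ (hypos pmin).ne' this
          linarith
        have hμt : μ = transmission G p' := by
          have := e2
          rw [hYpp] at this
          have h := mul_right_cancel₀ (hypos p').ne' this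
          linarith
        have hyall : ∀ z, y z = y pmin := by
          intro z
          rcases eq_or_ne z pmin with rfl | hz
          · rfl
          · exact (hyconst1 z hz).trans hYpp.symm
        have hTall : ∀ w, transmission G w = μ := by
          intro w
          have hw := congrFun hye w
          simp only [Matrix.mulVec, dotProduct, Pi.smul_apply, smul_eq_mul] at hw
          have : ∑ z, Dalpha G α w z * y z = transmission G w * y pmin := by
            rw [Finset.sum_congr rfl (fun z _ => by rw [hyall z]), ← Finset.sum_mul,
              Dalpha_rowsum]
          rw [this, hyall w] at hw
          exact mul_right_cancel₀ (hypos pmin).ne' hw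
        intro w
        rw [hTall w]
        rcases hμaR hμs hμt with h | h
        · rw [← h, hμs]
        · rw [← h, hμt]
      · -- exactly two vertices
        have hcard2' : Fintype.card V = 2 := by omega
        have hpair : ({pmin, p'} : Finset V) = Finset.univ := by
          apply Finset.eq_univ_of_card
          rw [Finset.card_insert_of_notMem (by simp [Ne.symm hp'ne]), Finset.card_singleton,
            hcard2']
        have hwmem : ∀ w : V, w = pmin ∨ w = p' := by
          intro w
          have : w ∈ ({pmin, p'} : Finset V) := by rw [hpair]; exact Finset.mem_univ w
          simpa using this
        have hst' : transmission G pmin = transmission G p' := by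
          unfold transmission
          rw [← hpair, Finset.sum_pair (Ne.symm hp'ne), Finset.sum_pair (Ne.symm hp'ne),
            SimpleGraph.dist_self, SimpleGraph.dist_self, SimpleGraph.dist_comm]
          push_cast
          ring
        have hμs : μ = transmission G pmin := by
          have e2' := e2
          rw [← hst'] at e2'
          have hpp : (0:ℝ) < y pmin * y p' := mul_pos (hypos pmin) (hypos p')
          have hsq : ((μ - α * transmission G pmin) ^ 2
              - ((1 - α) * transmission G pmin) ^ 2) * (y pmin * y p') = 0 := by
            linear_combination ((μ - α * transmission G pmin) * y p') * e1
              + ((1 - α) * transmission G pmin * y p') * e2'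
          have hX2 : (μ - α * transmission G pmin) ^ 2
              = ((1 - α) * transmission G pmin) ^ 2 := by
            rcases mul_eq_zero.mp hsq with h | h
            · linarith
            · exact absurd h hpp.ne'
          have hXpos : 0 ≤ μ - α * transmission G pmin := by linarith [hT_le_mu pmin]
          have hYpos : 0 < (1 - α) * transmission G pmin := mul_pos (by linarith) hspos
          have hfact : ((μ - α * transmission G pmin) - (1 - α) * transmission G pmin)
              * ((μ - α * transmission G pmin) + (1 - α) * transmission G pmin) = 0 := by
            linear_combination hX2
          rcases mul_eq_zero.mp hfact with h | h
          · linarith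
          · linarith
        have hμt : μ = transmission G p' := by rw [hμs, hst']
        intro w
        rcases hwmem w with rfl | rfl
        · rcases hμaR hμs hμt with h | h
          · exact h
          · rw [hst', h]
        · rcases hμaR hμs hμt with h | h
          · rw [← hst', h]
          · exact h
    -- conclude regularity and diameter ≤ 2
    have hdeg : ∀ w, G.degree w = Δ := by
      intro w
      have h1 := transmission_ge G hG w
      rw [hTaR w, haR] at h1
      have h2 : (Δ:ℝ) ≤ (G.degree w : ℝ) := by linarith
      have h3 : Δ ≤ G.degree w := by exact_mod_cast h2
      exact le_antisymm (hΔ w) h3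
    refine ⟨fun w z => (hdeg w).trans (hdeg z).symm, fun w z => ?_⟩
    apply dist_le_two_of_transmission_eq G hG w
    rw [hTaR w, haR, hdeg w]
  · -- regular with diameter ≤ 2 ⇒ equality
    rintro ⟨hreg, hdiam⟩
    have hΔ'Δeq : Δ' = Δ := by
      obtain ⟨v₀, _, hv₀⟩ := hΔ'exists
      rw [← hv₀, ← hu₀]
      exact hreg v₀ u₀
    have hdegΔ : ∀ w, G.degree w = Δ := fun w => by rw [← hu₀]; exact hreg w u₀
    have hTconst : ∀ w, transmission G w = aR := by
      intro w
      rw [transmission_eq_of_dist_le_two G hG w (hdiam w), hdegΔ w, haR]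
    have hones : Dalpha G α *ᵥ (fun _ => (1:ℝ)) = aR • (fun _ => (1:ℝ)) := by
      funext u
      simp only [Matrix.mulVec, dotProduct, mul_one, Pi.smul_apply, smul_eq_mul, mul_one]
      rw [Dalpha_rowsum, hTconst u]
    have h1ne : (fun _ => (1:ℝ)) ≠ (0 : V → ℝ) := by
      intro h
      have := congrFun h (Classical.arbitrary V)
      norm_num at this
    have hmem : aR ∈ spectrum ℝ (Dalpha G α) := mem_spectrum_of_eigenvec _ h1ne hones
    have hge : aR ≤ μ := by
      have h := le_csSup hbdd hmem
      have h2 : sSup (spectrum ℝ (Dalpha G α)) = μ := by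
        rw [← hmu_eq]; rfl
      rwa [h2] at h
    have hle : μ ≤ aR :=
      eigen_le_max_rowsum hM_nonneg hyne hye
        (fun u => by rw [Dalpha_rowsum, hTconst u]) haRpos.le
    have hμa : μ = aR := le_antisymm hle hge
    have hba : bR = aR := by rw [haR, hbR, hΔ'Δeq]
    rw [hmu_eq, hμa, hba, rQ_diag hα0 hα1 haRpos.le]


/-- lower bound for `μ_α` in terms of the maximum degree `Δ` and the second
maximum degree `Δ'`, with equality iff `G` is regular with diameter at most 2. -/
theorem muAlpha_lower_bound_degrees (G : SimpleGraph V) [DecidableRel G.Adj]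
    (hG : G.Connected) (hn : 2 ≤ Fintype.card V)
    (α : ℝ) (hα0 : 0 ≤ α) (hα1 : α < 1) (Δ Δ' : ℕ) (u₀ : V)
    (hu₀ : G.degree u₀ = Δ) (hΔ : ∀ w, G.degree w ≤ Δ)
    (hΔ'exists : ∃ v₀, v₀ ≠ u₀ ∧ G.degree v₀ = Δ')
    (hΔ' : ∀ w, w ≠ u₀ → G.degree w ≤ Δ') :
    muAlpha G α ≥
      (α * (4 * (Fintype.card V : ℝ) - 4 - Δ - Δ') +
        Real.sqrt (α ^ 2 * (4 * (Fintype.card V : ℝ) - 4 - Δ - Δ') ^ 2 -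
          4 * (2 * α - 1) * (2 * (Fintype.card V : ℝ) - 2 - Δ) *
            (2 * (Fintype.card V : ℝ) - 2 - Δ'))) / 2 ∧
      (muAlpha G α =
        (α * (4 * (Fintype.card V : ℝ) - 4 - Δ - Δ') +
          Real.sqrt (α ^ 2 * (4 * (Fintype.card V : ℝ) - 4 - Δ - Δ') ^ 2 -
            4 * (2 * α - 1) * (2 * (Fintype.card V : ℝ) - 2 - Δ) *
              (2 * (Fintype.card V : ℝ) - 2 - Δ'))) / 2 ↔
        ((∀ w z : V, G.degree w = G.degree z) ∧ ∀ w z : V, G.dist w z ≤ 2)) := by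
  obtain ⟨hineq, hiff⟩ := engine G hG hn hα0 hα1 Δ Δ' u₀ hu₀ hΔ hΔ'exists hΔ'
  have hgoal : (α * (4 * (Fintype.card V : ℝ) - 4 - Δ - Δ') +
        Real.sqrt (α ^ 2 * (4 * (Fintype.card V : ℝ) - 4 - Δ - Δ') ^ 2 -
          4 * (2 * α - 1) * (2 * (Fintype.card V : ℝ) - 2 - Δ) *
            (2 * (Fintype.card V : ℝ) - 2 - Δ'))) / 2
      = rQ α (2 * (Fintype.card V : ℝ) - 2 - Δ) (2 * (Fintype.card V : ℝ) - 2 - Δ') := by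
    unfold rQ
    rw [show α * (4 * (Fintype.card V : ℝ) - 4 - Δ - Δ')
          = α * ((2 * (Fintype.card V : ℝ) - 2 - Δ) + (2 * (Fintype.card V : ℝ) - 2 - Δ'))
        from by ring,
      show α ^ 2 * (4 * (Fintype.card V : ℝ) - 4 - Δ - Δ') ^ 2 -
            4 * (2 * α - 1) * (2 * (Fintype.card V : ℝ) - 2 - Δ) *
              (2 * (Fintype.card V : ℝ) - 2 - Δ')
          = α ^ 2 * ((2 * (Fintype.card V : ℝ) - 2 - Δ)
              + (2 * (Fintype.card V : ℝ) - 2 - Δ')) ^ 2 -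
            4 * (2 * α - 1) * (2 * (Fintype.card V : ℝ) - 2 - Δ) *
              (2 * (Fintype.card V : ℝ) - 2 - Δ')
        from by ring]
  rw [hgoal]
  exact ⟨hineq, hiff⟩

end DistAlpha
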